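/- arXiv:1208.1035 — 2 statements merged into one kernel-verified Lean document; each statement's English description precedes it below -/
import Mathlib

section
/- For p > 1 and the normalized Barenblatt profile B_p(x) = (C_p - |x|²)₊^{1/(p-1)} with unit mass, the p-th Fisher information satisfies I_p(B_p) = 2np/(p-1). -/
/-!
On its support `B^p = (C - |x|²)^(a+1)` with `a = 1/(p-1)`, so `∇ B^p = -2 (a+1) x B` and
`|∇ B^p|² / B = (2(a+1))² |x|² B`. The Fisher information is therefore
`(2(a+1))² ∫ |x|² B / ∫ B^p`, and the ratio of moments is `n / (2(a+1))` by the
identity `∫ x · ∇(B^p) = -n ∫ B^p`, giving `2n(a+1) = 2np/(p-1)`. In polar coordinates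
that identity is the fundamental theorem of calculus for `r^n (C - r²)^(a+1)` on `[0, √C]`,
which vanishes at both ends.
-/

open MeasureTheory Real Set InnerProductSpace

section Interval

variable {C : ℝ}

lemma integral_Ioi_pow_mul_max_sub_sq_rpow_eq_intervalIntegral {q : ℝ} (hq : q ≠ 0) (k : ℕ) :
    ∫ y in Ioi 0, y ^ k * max (C - y ^ 2) 0 ^ q = ∫ y in 0..√C, y ^ k * (C - y ^ 2) ^ q := by
  rw [intervalIntegral.integral_of_le (sqrt_nonneg C),
    setIntegral_eq_of_subset_of_forall_sdiff_eq_zero measurableSet_Ioi Ioc_subset_Ioi_self]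
  · refine setIntegral_congr_fun measurableSet_Ioc fun y ⟨hy0, hyb⟩ => ?_
    rw [max_eq_left (sub_nonneg.2 ((le_sqrt' hy0).1 hyb))]
  · rintro y ⟨hy0, hyb⟩
    have : C - y ^ 2 ≤ 0 := sub_nonpos.2 ((sqrt_lt' hy0).1 (not_le.1 (hyb ∘ And.intro hy0))).le
    rw [max_eq_right this, zero_rpow hq, mul_zero]

lemma hasDerivAt_pow_succ_mul_sub_sq_rpow {a y : ℝ} (m : ℕ) (hy : C - y ^ 2 ≠ 0) :
    HasDerivAt (fun y => y ^ (m + 1) * (C - y ^ 2) ^ (a + 1))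
      ((m + 1) * (y ^ m * (C - y ^ 2) ^ (a + 1))
        - 2 * (a + 1) * (y ^ (m + 2) * (C - y ^ 2) ^ a)) y := by
  have hbase : HasDerivAt (fun y => C - y ^ 2) (-(2 * y)) y := by
    simpa using (hasDerivAt_pow 2 y).const_sub C
  refine ((hasDerivAt_pow (m + 1) y).fun_mul
    (hbase.rpow_const (p := a + 1) (.inl hy))).congr_deriv ?_
  simp only [Nat.cast_add, Nat.cast_one, add_tsub_cancel_right]
  ring

lemma succ_mul_integral_pow_mul_max_sub_sq_rpow {a : ℝ} (ha : 0 < a) (hC : 0 ≤ C) (m : ℕ) :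
    (m + 1) * ∫ y in Ioi 0, y ^ m * max (C - y ^ 2) 0 ^ (a + 1)
      = 2 * (a + 1) * ∫ y in Ioi 0, y ^ (m + 2) * max (C - y ^ 2) 0 ^ a := by
  have hcont : ∀ (k : ℕ) {q : ℝ}, 0 ≤ q → Continuous fun y : ℝ => y ^ k * (C - y ^ 2) ^ q :=
    fun k q hq => (continuous_pow k).mul ((continuous_rpow_const hq).comp (by fun_prop))
  have hint : ∀ (c : ℝ) (k : ℕ) {q : ℝ}, 0 ≤ q →
      IntervalIntegrable (fun y : ℝ => c * (y ^ k * (C - y ^ 2) ^ q)) volume 0 √C :=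
    fun c k q hq => (continuous_const.mul (hcont k hq)).intervalIntegrable _ _
  have hFTC := intervalIntegral.integral_eq_sub_of_hasDerivAt_of_le (sqrt_nonneg C)
    (hcont (m + 1) (by linarith)).continuousOn
    (fun y hy => hasDerivAt_pow_succ_mul_sub_sq_rpow m (by nlinarith [sq_sqrt hC, hy.1, hy.2]))
    ((hint _ m (by linarith)).sub (hint _ (m + 2) ha.le))
  rw [intervalIntegral.integral_sub (hint _ m (by linarith)) (hint _ (m + 2) ha.le),
    intervalIntegral.integral_const_mul, intervalIntegral.integral_const_mul] at hFTC
  rw [integral_Ioi_pow_mul_max_sub_sq_rpow_eq_intervalIntegral (by linarith),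
    integral_Ioi_pow_mul_max_sub_sq_rpow_eq_intervalIntegral ha.ne']
  rw [sq_sqrt hC, sub_self, zero_rpow (by linarith), mul_zero, zero_pow m.succ_ne_zero, zero_mul,
    sub_zero] at hFTC
  linarith

end Interval

section Space

variable {E : Type*} [NormedAddCommGroup E] [InnerProductSpace ℝ E] {C : ℝ}

lemma hasGradientAt_max_sub_norm_sq_rpow [CompleteSpace E] {s : ℝ} {x : E}
    (hx : 0 < C - ‖x‖ ^ 2) :
    HasGradientAt (fun y : E => max (C - ‖y‖ ^ 2) 0 ^ s)
      (-(2 * s * (C - ‖x‖ ^ 2) ^ (s - 1)) • x) x := by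
  have hloc : (fun y : E => max (C - ‖y‖ ^ 2) 0 ^ s) =ᶠ[nhds x] fun y => (C - ‖y‖ ^ 2) ^ s := by
    filter_upwards [(isOpen_lt continuous_const
      (by fun_prop : Continuous fun y : E => C - ‖y‖ ^ 2)).mem_nhds hx] with y hy
    rw [max_eq_left hy.le]
  rw [hasGradientAt_iff_hasFDerivAt]
  refine HasFDerivAt.congr_of_eventuallyEq ?_ hloc
  refine (((hasStrictFDerivAt_norm_sq x).hasFDerivAt.const_sub C).rpow_const
    (p := s) (.inl hx.ne')).congr_fderiv ?_
  ext y
  simp only [smul_neg, neg_apply, smul_apply, coe_innerSL_apply, nsmul_eq_mul, smul_eq_mul,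
    map_smul, toDual_apply_apply]
  ring

lemma norm_gradient_max_sub_norm_sq_rpow_sq_div [CompleteSpace E] {a : ℝ} (ha : a ≠ 0) (x : E) :
    ‖gradient (fun y : E => max (C - ‖y‖ ^ 2) 0 ^ (a + 1)) x‖ ^ 2 / max (C - ‖x‖ ^ 2) 0 ^ a
      = (2 * (a + 1)) ^ 2 * (‖x‖ ^ 2 * max (C - ‖x‖ ^ 2) 0 ^ a) := by
  rcases lt_or_ge 0 (C - ‖x‖ ^ 2) with hx | hx
  · have hpos : 0 < (C - ‖x‖ ^ 2) ^ a := rpow_pos_of_pos hx a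
    rw [(hasGradientAt_max_sub_norm_sq_rpow hx).gradient, add_sub_cancel_right, max_eq_left hx.le,
      norm_smul, mul_pow, Real.norm_eq_abs, sq_abs]
    field_simp
  · rw [max_eq_right hx, zero_rpow ha, div_zero, mul_zero, mul_zero]

variable [FiniteDimensional ℝ E] [MeasurableSpace E] [BorelSpace E] (μ : Measure E)
  [μ.IsAddHaarMeasure]

lemma integral_max_sub_norm_sq_rpow_pos {s : ℝ} (hs : 0 < s) (hC : 0 < C) :
    0 < ∫ x, max (C - ‖x‖ ^ 2) 0 ^ s ∂μ := by
  refine Continuous.integral_pos_of_hasCompactSupport_nonneg_nonzero (x := 0)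
    ((continuous_rpow_const hs.le).comp (by fun_prop)) ?_
    (fun x => rpow_nonneg (le_max_right _ _) _)
    (by simp [hC.le, hC.ne', hs.ne'])
  refine HasCompactSupport.intro (isCompact_closedBall 0 √C) fun x hx => ?_
  have : C - ‖x‖ ^ 2 ≤ 0 := by
    rw [Metric.mem_closedBall, dist_zero_right, not_le,
      sqrt_lt' ((sqrt_nonneg C).trans_lt hx)] at hx
    linarith
  rw [max_eq_right this, zero_rpow hs.ne']

/-- For `u = (C - ‖x‖²)₊ ^ (a + 1)` one has `⟪x, ∇u⟫ = -2 (a + 1) ‖x‖² (C - ‖x‖²)₊ ^ a`, so this is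
the identity `∫ ⟪x, ∇u⟫ = -(dim E) ∫ u`, proved in polar coordinates. -/
lemma two_mul_add_one_mul_integral_norm_sq_mul_max_sub_norm_sq_rpow [Nontrivial E] {a : ℝ}
    (ha : 0 < a) (hC : 0 ≤ C) :
    2 * (a + 1) * ∫ x, ‖x‖ ^ 2 * max (C - ‖x‖ ^ 2) 0 ^ a ∂μ
      = Module.finrank ℝ E * ∫ x, max (C - ‖x‖ ^ 2) 0 ^ (a + 1) ∂μ := by
  obtain ⟨m, hm⟩ := Nat.exists_eq_add_one.2 (Module.finrank_pos (R := ℝ) (M := E))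
  rw [integral_fun_norm_addHaar μ (fun r => r ^ 2 * max (C - r ^ 2) 0 ^ a),
    integral_fun_norm_addHaar μ (fun r => max (C - r ^ 2) 0 ^ (a + 1)), hm]
  simp_rw [smul_eq_mul, nsmul_eq_mul, add_tsub_cancel_right, ← mul_assoc, ← pow_add]
  push_cast
  linear_combination (m + 1) * μ.real (Metric.ball 0 1) *
    (succ_mul_integral_pow_mul_max_sub_sq_rpow ha hC m).symm

end Space

theorem barenblatt_fisher_information_general
    (n : ℕ) (hn : 1 ≤ n) (p : ℝ) (hp : 1 < p) (C : ℝ) (hC : 0 < C)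
    (B : EuclideanSpace ℝ (Fin n) → ℝ)
    (hB : ∀ x, B x = max (C - ‖x‖ ^ 2) 0 ^ (1 / (p - 1))) :
    (∫ x, B x ^ p)⁻¹ *
        ∫ x in {x : EuclideanSpace ℝ (Fin n) | 0 < B x},
          ‖gradient (fun y => B y ^ p) x‖ ^ 2 / B x
      = 2 * (n : ℝ) * p / (p - 1) := by
  generalize ha_def : 1 / (p - 1) = a at hB
  have hp1 : p - 1 ≠ 0 := (sub_pos.2 hp).ne'
  have ha : 0 < a := ha_def ▸ one_div_pos.2 (sub_pos.2 hp)
  have hpa : a * p = a + 1 := by rw [← ha_def]; field_simp; ring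
  have hBp : ∀ x, B x ^ p = max (C - ‖x‖ ^ 2) 0 ^ (a + 1) := fun x => by
    rw [hB, ← rpow_mul (le_max_right _ _), hpa]
  have hfisher : ∀ x, ‖gradient (fun y => B y ^ p) x‖ ^ 2 / B x
      = (2 * (a + 1)) ^ 2 * (‖x‖ ^ 2 * B x) := fun x => by
    rw [funext hBp, hB, norm_gradient_max_sub_norm_sq_rpow_sq_div ha.ne']
  have hsupport : ∀ x ∉ {x | 0 < B x}, (2 * (a + 1)) ^ 2 * (‖x‖ ^ 2 * B x) = 0 := fun x hx => by
    have hBx : B x = 0 := le_antisymm (not_lt.1 hx) (by rw [hB]; positivity)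
    rw [hBx, mul_zero, mul_zero]
  have : Nontrivial (EuclideanSpace ℝ (Fin n)) := by
    apply Module.nontrivial_of_finrank_pos (R := ℝ)
    rw [finrank_euclideanSpace_fin]; omega
  have hmoment := two_mul_add_one_mul_integral_norm_sq_mul_max_sub_norm_sq_rpow volume ha hC.le
    (E := EuclideanSpace ℝ (Fin n))
  have hpos := integral_max_sub_norm_sq_rpow_pos volume (E := EuclideanSpace ℝ (Fin n))
    (by linarith : 0 < a + 1) hC
  simp_rw [hfisher, setIntegral_eq_integral_of_forall_compl_eq_zero hsupport, integral_const_mul,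
    hBp, hB]
  rw [finrank_euclideanSpace_fin] at hmoment
  rw [show 2 * (n : ℝ) * p / (p - 1) = 2 * n * (a + 1) by rw [← hpa, ← ha_def]; field_simp,
    inv_mul_eq_div, div_eq_iff hpos.ne']
  linear_combination (2 * (a + 1)) * hmoment

/-- for `p > 1` and the unit-mass Barenblatt profile
`B_p(x) = (C_p - |x|²)₊^{1/(p-1)}`, the `p`-th Fisher information is
`I_p(B_p) = 2 n p/(p-1)`. -/
theorem barenblatt_fisher_information
    (n : ℕ) (hn : 1 ≤ n) (p : ℝ) (hp : 1 < p) (C : ℝ) (hC : 0 < C)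
    (B : EuclideanSpace ℝ (Fin n) → ℝ)
    (hB : ∀ x, B x = max (C - ‖x‖ ^ 2) 0 ^ (1 / (p - 1)))
    (hmass : ∫ x, B x = 1) :
    (∫ x, B x ^ p)⁻¹ *
        ∫ x in {x : EuclideanSpace ℝ (Fin n) | 0 < B x},
          ‖gradient (fun y => B y ^ p) x‖ ^ 2 / B x
      = 2 * (n : ℝ) * p / (p - 1) :=
  barenblatt_fisher_information_general n hn p hp C hC B hB
end

section
/- For n/(n+2) < p < 1 and the normalized Barenblatt profile B_p(x) = (C_p + |x|²)^{1/(p-1)} of unit mass on ℝⁿ, the p-th Fisher information satisfies I_p(B_p) = 2np/(1-p). -/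
/-!
Write `B = (C + |x|²)^α` with `α = 1/(p-1)`, so that `B^p = (C + |x|²) B` and
`|∇ B^p|² / B = (2(α+1))² |x|² B`. Both integrals of the Fisher ratio are thus combinations of
`∫ B` and the second moment `∫ |x|² B`, and these are tied by the moment identity
`(n + 2 + 2α) ∫ |x|² B = -n C ∫ B`. In polar coordinates that identity is the fundamental theorem
of calculus for `r^n (C + r²)^(α+1)`, which vanishes at `0` and, since `n + 2 + 2α < 0`, at `∞`.
-/

open MeasureTheory Real

open Set Filter Topology Module

section Radial

variable {C : ℝ}

lemma continuous_add_sq_rpow (hC : 0 < C) (β : ℝ) :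
    Continuous fun r : ℝ => (C + r ^ 2) ^ β :=
  (continuous_const.add (continuous_pow 2)).rpow_const fun r =>
    Or.inl (add_pos_of_pos_of_nonneg hC (sq_nonneg r)).ne'

lemma pow_mul_add_sq_rpow_le (hC : 0 ≤ C) {r β : ℝ} (hr : 0 < r) (hβ : β ≤ 0) (k : ℕ) :
    r ^ k * (C + r ^ 2) ^ β ≤ r ^ ((k : ℝ) + 2 * β) :=
  calc r ^ k * (C + r ^ 2) ^ β ≤ r ^ k * (r ^ 2) ^ β := by
        refine mul_le_mul_of_nonneg_left ?_ (by positivity)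
        exact rpow_le_rpow_of_nonpos (by positivity) (le_add_of_nonneg_left hC) hβ
    _ = r ^ ((k : ℝ) + 2 * β) := by
        rw [← rpow_natCast r k, ← rpow_natCast r 2, ← rpow_mul hr.le, ← rpow_add hr]
        norm_num

lemma integrableOn_Ioi_pow_mul_add_sq_rpow (hC : 0 < C) {k : ℕ} {β : ℝ}
    (h : (k : ℝ) + 2 * β < -1) :
    IntegrableOn (fun r : ℝ => r ^ k * (C + r ^ 2) ^ β) (Ioi 0) := by
  have hcont := (continuous_pow k).mul (continuous_add_sq_rpow hC β)
  have htail : IntegrableOn (fun r : ℝ => r ^ k * (C + r ^ 2) ^ β) (Ioi 1) := by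
    refine (integrableOn_Ioi_rpow_of_lt h one_pos).mono' hcont.aestronglyMeasurable.restrict ?_
    filter_upwards [ae_restrict_mem measurableSet_Ioi] with r (hr : 1 < r)
    rw [norm_of_nonneg (by positivity)]
    exact pow_mul_add_sq_rpow_le hC.le (one_pos.trans hr)
      (by nlinarith [k.cast_nonneg (α := ℝ)]) k
  have := (hcont.integrableOn_Ioc (a := 0) (b := 1)).union htail
  rwa [Ioc_union_Ioi_eq_Ioi zero_le_one] at this

lemma tendsto_pow_mul_add_sq_rpow_atTop (hC : 0 < C) {k : ℕ} {β : ℝ}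
    (h : (k : ℝ) + 2 * β < 0) :
    Tendsto (fun r : ℝ => r ^ k * (C + r ^ 2) ^ β) atTop (𝓝 0) := by
  have hlim : Tendsto (fun r : ℝ => r ^ ((k : ℝ) + 2 * β)) atTop (𝓝 0) := by
    simpa using tendsto_rpow_neg_atTop (neg_pos.mpr h)
  refine squeeze_zero' ?_ ?_ hlim <;> filter_upwards [eventually_gt_atTop 0] with r hr
  · positivity
  · exact pow_mul_add_sq_rpow_le hC.le hr (by nlinarith [k.cast_nonneg (α := ℝ)]) k

lemma hasDerivAt_pow_mul_add_sq_rpow_add_one (hC : 0 < C) {n : ℕ} (hn : n ≠ 0) (α r : ℝ) :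
    HasDerivAt (fun r : ℝ => r ^ n * (C + r ^ 2) ^ (α + 1))
      (r ^ (n - 1) * ((n * C + (n + 2 + 2 * α) * r ^ 2) * (C + r ^ 2) ^ α)) r := by
  have hpos : 0 < C + r ^ 2 := by positivity
  have hinner : HasDerivAt (fun r : ℝ => C + r ^ 2) (2 * r) r := by
    simpa using (hasDerivAt_pow 2 r).const_add C
  refine ((hasDerivAt_pow n r).mul
    (hinner.rpow_const (p := α + 1) (Or.inl hpos.ne'))).congr_deriv ?_
  rw [add_sub_cancel_right, rpow_add_one hpos.ne', ← pow_sub_one_mul hn]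
  ring

lemma integral_Ioi_pow_mul_add_sq_rpow_eq_zero (hC : 0 < C) {n : ℕ} (hn : n ≠ 0) {α : ℝ}
    (hα : (n : ℝ) + 2 + 2 * α < 0) :
    ∫ r in Ioi (0 : ℝ), r ^ (n - 1) * ((n * C + (n + 2 + 2 * α) * r ^ 2) * (C + r ^ 2) ^ α)
      = 0 := by
  have hn1 : ((n - 1 : ℕ) : ℝ) = n - 1 := by rw [Nat.cast_pred (Nat.pos_of_ne_zero hn)]
  have hI := integrableOn_Ioi_pow_mul_add_sq_rpow hC (k := n - 1) (β := α) (by rw [hn1]; linarith)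
  have hJ := integrableOn_Ioi_pow_mul_add_sq_rpow hC (k := n - 1 + 2) (β := α)
    (by push_cast [hn1]; linarith)
  have hint : IntegrableOn
      (fun r : ℝ => r ^ (n - 1) * ((n * C + (n + 2 + 2 * α) * r ^ 2) * (C + r ^ 2) ^ α))
      (Ioi 0) := by
    refine IntegrableOn.congr_fun ((hI.const_mul (n * C)).add (hJ.const_mul (n + 2 + 2 * α)))
      (fun r _ => ?_) measurableSet_Ioi
    simp only [Pi.add_apply, pow_add]
    ring
  have hcont : Continuous fun r : ℝ => r ^ n * (C + r ^ 2) ^ (α + 1) :=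
    (continuous_pow n).mul (continuous_add_sq_rpow hC _)
  rw [integral_Ioi_of_hasDerivAt_of_tendsto hcont.continuousWithinAt
    (fun r _ => hasDerivAt_pow_mul_add_sq_rpow_add_one hC hn α r) hint
    (tendsto_pow_mul_add_sq_rpow_atTop hC (by linarith))]
  simp [zero_pow hn]

end Radial

section Haar

variable {E : Type*} [NormedAddCommGroup E] [NormedSpace ℝ E] [FiniteDimensional ℝ E]
  [Nontrivial E] [MeasurableSpace E] [BorelSpace E] (μ : Measure E) [μ.IsAddHaarMeasure] {C : ℝ}

lemma integrable_norm_pow_mul_add_norm_sq_rpow (hC : 0 < C) (k : ℕ) {β : ℝ}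
    (h : (finrank ℝ E : ℝ) + k + 2 * β < 0) :
    Integrable (fun x : E => ‖x‖ ^ k * (C + ‖x‖ ^ 2) ^ β) μ := by
  rw [integrable_fun_norm_addHaar μ (f := fun r => r ^ k * (C + r ^ 2) ^ β)]
  refine IntegrableOn.congr_fun
    (integrableOn_Ioi_pow_mul_add_sq_rpow hC (k := finrank ℝ E - 1 + k) (β := β) ?_)
    (fun r _ => ?_) measurableSet_Ioi
  · push_cast [Nat.cast_pred finrank_pos]
    linarith
  · simp only [pow_add, smul_eq_mul, mul_assoc]

lemma integrable_add_norm_sq_rpow (hC : 0 < C) {β : ℝ} (h : (finrank ℝ E : ℝ) + 2 * β < 0) :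
    Integrable (fun x : E => (C + ‖x‖ ^ 2) ^ β) μ := by
  simpa using integrable_norm_pow_mul_add_norm_sq_rpow μ hC 0 (by push_cast; linarith)

lemma integral_add_norm_sq_rpow_pos (hC : 0 < C) {β : ℝ} (h : (finrank ℝ E : ℝ) + 2 * β < 0) :
    0 < ∫ x, (C + ‖x‖ ^ 2) ^ β ∂μ := by
  have hsupp : Function.support (fun x : E => (C + ‖x‖ ^ 2) ^ β) = univ :=
    Function.support_eq_univ fun x => (rpow_pos_of_pos (by positivity) β).ne'
  rw [integral_pos_iff_support_of_nonneg (fun x => by positivity)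
    (integrable_add_norm_sq_rpow μ hC h), hsupp]
  exact NeZero.pos (μ univ)

lemma integral_norm_sq_mul_add_norm_sq_rpow (hC : 0 < C) {α : ℝ}
    (hα : (finrank ℝ E : ℝ) + 2 + 2 * α < 0) :
    (finrank ℝ E + 2 + 2 * α) * ∫ x, ‖x‖ ^ 2 * (C + ‖x‖ ^ 2) ^ α ∂μ
      = -(finrank ℝ E * C * ∫ x, (C + ‖x‖ ^ 2) ^ α ∂μ) := by
  set n : ℕ := finrank ℝ E
  have hzero : ∫ x, (n * C + (n + 2 + 2 * α) * ‖x‖ ^ 2) * (C + ‖x‖ ^ 2) ^ α ∂μ = 0 := by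
    rw [integral_fun_norm_addHaar μ fun r => (n * C + (n + 2 + 2 * α) * r ^ 2) * (C + r ^ 2) ^ α]
    simp only [smul_eq_mul]
    rw [integral_Ioi_pow_mul_add_sq_rpow_eq_zero hC finrank_pos.ne' hα, mul_zero, smul_zero]
  have h0 := integrable_add_norm_sq_rpow μ hC (β := α) (by linarith)
  have h2 := integrable_norm_pow_mul_add_norm_sq_rpow μ hC 2 (β := α) (by push_cast; linarith)
  rw [← integral_const_mul, ← integral_const_mul, eq_neg_iff_add_eq_zero,
    ← integral_add (h2.const_mul _) (h0.const_mul _), ← hzero]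
  congr 1 with x
  ring

end Haar

lemma hasGradientAt_add_norm_sq_rpow {F : Type*} [NormedAddCommGroup F] [InnerProductSpace ℝ F]
    [CompleteSpace F] {C : ℝ} (hC : 0 < C) (q : ℝ) (x : F) :
    HasGradientAt (fun y => (C + ‖y‖ ^ 2) ^ q) ((2 * q * (C + ‖x‖ ^ 2) ^ (q - 1)) • x) x := by
  have hpos : 0 < C + ‖x‖ ^ 2 := by positivity
  have hfderiv := (hasDerivAt_rpow_const (x := C + ‖x‖ ^ 2) (p := q)
    (Or.inl hpos.ne')).comp_hasFDerivAt x ((hasStrictFDerivAt_norm_sq x).hasFDerivAt.const_add C)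
  rw [hasGradientAt_iff_hasFDerivAt]
  refine hfderiv.congr_fderiv ?_
  ext y
  simp only [smul_apply, coe_innerSL_apply, nsmul_eq_mul, Nat.cast_ofNat, smul_eq_mul, map_smul,
    InnerProductSpace.toDual_apply_apply]
  ring

lemma norm_sq_gradient_add_norm_sq_rpow_add_one_div {F : Type*} [NormedAddCommGroup F]
    [InnerProductSpace ℝ F] [CompleteSpace F] {C : ℝ} (hC : 0 < C) (α : ℝ) (x : F) :
    ‖gradient (fun y => (C + ‖y‖ ^ 2) ^ (α + 1)) x‖ ^ 2 / (C + ‖x‖ ^ 2) ^ α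
      = (2 * (α + 1)) ^ 2 * (‖x‖ ^ 2 * (C + ‖x‖ ^ 2) ^ α) := by
  rw [(hasGradientAt_add_norm_sq_rpow hC _ x).gradient, norm_smul, add_sub_cancel_right,
    div_eq_iff (by positivity), Real.norm_eq_abs, mul_pow, sq_abs]
  ring

section Fisher

variable {E : Type*} [NormedAddCommGroup E] [InnerProductSpace ℝ E] [FiniteDimensional ℝ E]
  [Nontrivial E] [MeasurableSpace E] [BorelSpace E] (μ : Measure E) [μ.IsAddHaarMeasure] {C : ℝ}

theorem fisher_ratio_add_norm_sq_rpow (hC : 0 < C) {α : ℝ}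
    (hα : (finrank ℝ E : ℝ) + 2 + 2 * α < 0) :
    (∫ x, (C + ‖x‖ ^ 2) ^ (α + 1) ∂μ)⁻¹
        * ∫ x, ‖gradient (fun y => (C + ‖y‖ ^ 2) ^ (α + 1)) x‖ ^ 2 / (C + ‖x‖ ^ 2) ^ α ∂μ
      = -(2 * finrank ℝ E * (α + 1)) := by
  have hsplit : ∀ x : E, (C + ‖x‖ ^ 2) ^ (α + 1)
      = C * (C + ‖x‖ ^ 2) ^ α + ‖x‖ ^ 2 * (C + ‖x‖ ^ 2) ^ α := fun x => by
    rw [rpow_add_one (by positivity)]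
    ring
  have h0 := integrable_add_norm_sq_rpow μ hC (β := α) (by linarith)
  have h2 := integrable_norm_pow_mul_add_norm_sq_rpow μ hC 2 (β := α) (by push_cast; linarith)
  have hmass := integral_add_norm_sq_rpow_pos μ hC (β := α) (by linarith)
  have hmoment := integral_norm_sq_mul_add_norm_sq_rpow μ hC hα
  simp only [norm_sq_gradient_add_norm_sq_rpow_add_one_div hC]
  simp only [hsplit]
  rw [integral_add (h0.const_mul C) h2, integral_const_mul, integral_const_mul]
  set m := ∫ x, (C + ‖x‖ ^ 2) ^ α ∂μ
  set M := ∫ x, ‖x‖ ^ 2 * (C + ‖x‖ ^ 2) ^ α ∂μ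
  set n : ℝ := (finrank ℝ E : ℝ)
  set S := n + 2 + 2 * α with hS_def
  have hS : S ≠ 0 := hα.ne
  have hα1 : α + 1 ≠ 0 := by linarith [(finrank ℝ E).cast_nonneg (α := ℝ)]
  have hCm : C * m ≠ 0 := (mul_pos hC hmass).ne'
  have hM : M = -(n * C * m) / S := by
    rw [eq_div_iff hS]
    linear_combination hmoment
  have htotal : C * m + M = 2 * (α + 1) * (C * m) / S := by
    rw [hM]
    field_simp
    rw [hS_def]
    ring
  rw [htotal, hM]
  field_simp

end Fisher

theorem barenblatt_fisher_information_fast_diffusion_general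
    (n : ℕ) (hn : 1 ≤ n) (p : ℝ)
    (hp_lower : (n : ℝ) / ((n : ℝ) + 2) < p) (hp_upper : p < 1)
    (C : ℝ) (hC : 0 < C)
    (B : EuclideanSpace ℝ (Fin n) → ℝ)
    (hB : ∀ x, B x = (C + ‖x‖ ^ 2) ^ (1 / (p - 1))) :
    (∫ x, B x ^ p)⁻¹ * ∫ x, ‖gradient (fun y => B y ^ p) x‖ ^ 2 / B x
      = 2 * (n : ℝ) * p / (1 - p) := by
  have : Nontrivial (EuclideanSpace ℝ (Fin n)) :=
    Module.nontrivial_of_finrank_pos (R := ℝ) (by rw [finrank_euclideanSpace_fin]; omega)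
  have hp1 : p - 1 ≠ 0 := by linarith
  have hα1 : 1 / (p - 1) + 1 = p / (p - 1) := by field_simp; ring
  have hdim : (n : ℝ) + 2 + 2 * (1 / (p - 1)) < 0 := by
    have hD := (div_lt_iff₀ (by positivity : (0 : ℝ) < n + 2)).mp hp_lower
    have hS : (n : ℝ) + 2 + 2 * (1 / (p - 1)) = ((n + 2) * p - n) / (p - 1) := by
      field_simp
      ring
    rw [hS]
    exact div_neg_of_pos_of_neg (by linarith) (by linarith)
  have hBp : (fun y => B y ^ p) = fun y => (C + ‖y‖ ^ 2) ^ (1 / (p - 1) + 1) := funext fun y => by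
    rw [hB, ← rpow_mul (by positivity), hα1]
    congr 1
    field_simp
  rw [hBp]
  simp only [hB]
  rw [fisher_ratio_add_norm_sq_rpow volume hC (by simpa using hdim), finrank_euclideanSpace_fin,
    hα1]
  have h1p : 1 - p ≠ 0 := by linarith
  field_simp
  ring

/-- for `n/(n+2) < p < 1` and the unit-mass Barenblatt profile
`B_p(x) = (C_p + |x|²)^{1/(p-1)}`, the `p`-th Fisher information is
`I_p(B_p) = 2 n p/(1-p)`. -/
theorem barenblatt_fisher_information_fast_diffusion
    (n : ℕ) (hn : 1 ≤ n) (p : ℝ)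
    (hp_lower : (n : ℝ) / ((n : ℝ) + 2) < p) (hp_upper : p < 1)
    (C : ℝ) (hC : 0 < C)
    (B : EuclideanSpace ℝ (Fin n) → ℝ)
    (hB : ∀ x, B x = (C + ‖x‖ ^ 2) ^ (1 / (p - 1)))
    (hmass : ∫ x, B x = 1) :
    (∫ x, B x ^ p)⁻¹ * ∫ x, ‖gradient (fun y => B y ^ p) x‖ ^ 2 / B x
      = 2 * (n : ℝ) * p / (1 - p) :=
  barenblatt_fisher_information_fast_diffusion_general n hn p hp_lower hp_upper C hC B hB
end
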